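/- arXiv:2208.01921 — 2 statements merged into one kernel-verified Lean document; each statement's English description precedes it below -/
import Mathlib

section
/- Let p be a prime, D a discriminant form of even signature and level a power of p, and γ a nonzero isotropic element of D. Suppose γ^⊥ contains an isotropic subgroup of D isomorphic to (Z/pZ)^2. Then e^γ ∈ C[D] can be written as a linear combination of isotropic lifts: explicitly, if H_0, H_1, …, H_p are the p+1 order-p subgroups of such a group H, then e^γ = (1/p)( Σ_{j=1}^{p} ↑_{H_j}^D(e^{γ+H_j}) − ↑_{H_0}^D(Σ_{μ ∈ H_1∖{0}} e^{γ+μ+H_0}) ). -/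
open scoped Classical

/-- `e(x) = exp(2πix)`; it only depends on `x` modulo 1. -/
noncomputable def e (x : ℚ) : ℂ := Complex.exp (2 * Real.pi * Complex.I * (x : ℂ))

/-- A discriminant form structure on a finite abelian group `D`: a function
`q : D → ℚ` representing a quadratic form `D → ℚ/ℤ` (all identities hold modulo 1)
whose associated bilinear form `b(β,γ) = q(β+γ) - q(β) - q(γ) mod 1` is
nondegenerate. -/
structure IsDiscForm (D : Type*) [AddCommGroup D] [Fintype D] (q : D → ℚ) : Prop where
  quad : ∀ (n : ℤ) (γ : D), ∃ k : ℤ, q (n • γ) - (n : ℚ) ^ 2 * q γ = (k : ℚ)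
  bilin : ∀ α β γ : D, ∃ k : ℤ,
    (q (α + β + γ) - q (α + β) - q γ) - (q (α + γ) - q α - q γ)
      - (q (β + γ) - q β - q γ) = (k : ℚ)
  nondeg : ∀ γ : D, (∀ β : D, ∃ k : ℤ, q (γ + β) - q γ - q β = (k : ℚ)) → γ = 0

/-! Put `x = β - γ`. Every nonzero element of `H` lies on exactly one of the `p + 1` lines `Hs j`,
and `0` lies on all of them, so the first sum is `p • [x = 0] + [x ∈ H] - [x ∈ Hs 0]`.
Two distinct lines span `H`, so every `x ∈ H` is uniquely `μ + ν` with `μ ∈ Hs 1` and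
`ν ∈ Hs 0`; hence the second sum is `[x ∈ H] - [x ∈ Hs 0]`, and the difference is
`p • [x = 0]`. -/

open Finset

namespace AddSubgroup

variable {G : Type*} [AddCommGroup G] {p : ℕ}

theorem zmultiples_eq_of_mem_of_natCard_eq_prime (hp : p.Prime) {K : AddSubgroup G}
    (hK : Nat.card K = p) {x : G} (hxK : x ∈ K) (hx0 : x ≠ 0) : zmultiples x = K := by
  have : Finite K := Nat.finite_of_card_ne_zero (hK ▸ hp.ne_zero)
  have hord : addOrderOf x = p := by
    rcases (Nat.dvd_prime hp).mp (hK ▸ K.addOrderOf_dvd_natCard hxK) with h | h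
    · exact absurd (AddMonoid.addOrderOf_eq_one_iff.mp h) hx0
    · exact h
  exact eq_of_le_of_card_ge (zmultiples_le_of_mem hxK) (by rw [Nat.card_zmultiples, hord, hK])

theorem disjoint_of_natCard_eq_prime (hp : p.Prime) {K L : AddSubgroup G}
    (hK : Nat.card K = p) (hL : Nat.card L = p) (hKL : K ≠ L) : Disjoint K L := by
  refine disjoint_def.mpr fun {x} hxK hxL => ?_
  by_contra hx0
  exact hKL ((zmultiples_eq_of_mem_of_natCard_eq_prime hp hK hxK hx0).symm.trans
    (zmultiples_eq_of_mem_of_natCard_eq_prime hp hL hxL hx0))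

theorem natCard_mul_natCard_le_natCard_sup [Finite G] {K L : AddSubgroup G}
    (hKL : Disjoint K L) : Nat.card K * Nat.card L ≤ Nat.card ↥(K ⊔ L) := by
  let f : K × L → ↥(K ⊔ L) := fun ab =>
    ⟨ab.1 + ab.2, add_mem (mem_sup_left ab.1.2) (mem_sup_right ab.2.2)⟩
  have hf : Function.Injective f := by
    rintro ⟨a, b⟩ ⟨a', b'⟩ hab
    have hsub : (a : G) - a' = b' - b := by
      have := congrArg Subtype.val hab
      simp only [f] at this
      linear_combination (norm := abel_nf) this
    have h0 : (a : G) - a' = 0 :=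
      disjoint_def.mp hKL (K.sub_mem a.2 a'.2) (hsub ▸ L.sub_mem b'.2 b.2)
    have ha : (a : G) = a' := sub_eq_zero.mp h0
    have hb : (b : G) = b' := (sub_eq_zero.mp (hsub.symm.trans h0)).symm
    exact Prod.ext (Subtype.ext ha) (Subtype.ext hb)
  simpa only [Nat.card_prod] using Nat.card_le_card_of_injective f hf

theorem sup_eq_of_natCard_eq_prime_sq [Finite G] (hp : p.Prime) {K L H : AddSubgroup G}
    (hK : Nat.card K = p) (hL : Nat.card L = p) (hKL : K ≠ L) (hKH : K ≤ H) (hLH : L ≤ H)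
    (hH : Nat.card H = p ^ 2) : K ⊔ L = H :=
  eq_of_le_of_card_ge (sup_le hKH hLH) <| by
    simpa only [hH, hK, hL, sq] using
      natCard_mul_natCard_le_natCard_sup (disjoint_of_natCard_eq_prime hp hK hL hKL)

theorem card_filter_mem_sub_mem [Fintype G] {K L : AddSubgroup G} (hKL : Disjoint K L)
    (x : G) : #{μ | μ ∈ K ∧ x - μ ∈ L} = if x ∈ K ⊔ L then 1 else 0 := by
  split_ifs with hx
  · obtain ⟨y, hyK, z, hzL, rfl⟩ := mem_sup.mp hx
    refine Finset.card_eq_one.mpr ⟨y, Finset.ext fun μ => ?_⟩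
    simp only [Finset.mem_filter, Finset.mem_univ, true_and, Finset.mem_singleton]
    constructor
    · rintro ⟨hμK, hμL⟩
      have hsub : μ - y = z - (y + z - μ) := by abel
      exact sub_eq_zero.mp <| disjoint_def.mp hKL (K.sub_mem hμK hyK) (hsub ▸ L.sub_mem hzL hμL)
    · rintro rfl
      exact ⟨hyK, by simpa using hzL⟩
  · refine Finset.card_eq_zero.mpr <|
      Finset.filter_eq_empty_iff.mpr fun μ _ ⟨hμK, hμL⟩ => hx ?_
    simpa using add_mem (mem_sup_left hμK) (mem_sup_right (S := K) hμL)

theorem card_filter_mem_ne_zero_sub_mem_add [Fintype G] {K L : AddSubgroup G}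
    (hKL : Disjoint K L) (x : G) :
    #{μ | μ ∈ K ∧ μ ≠ 0 ∧ x - μ ∈ L} + (if x ∈ L then 1 else 0)
      = if x ∈ K ⊔ L then 1 else 0 := by
  have herase : ({μ | μ ∈ K ∧ μ ≠ 0 ∧ x - μ ∈ L} : Finset G)
      = ({μ | μ ∈ K ∧ x - μ ∈ L} : Finset G).erase 0 := by
    ext μ
    simp only [Finset.mem_filter, Finset.mem_univ, true_and, Finset.mem_erase]
    tauto
  rw [herase, ← card_filter_mem_sub_mem hKL]
  split_ifs with hxL
  · exact Finset.card_erase_add_one (by simpa using hxL)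
  · rw [Finset.erase_eq_of_notMem (by simpa using hxL), add_zero]

end AddSubgroup

section Lines

variable {G ι : Type*} [AddCommGroup G] {p : ℕ} {H : AddSubgroup G} {Hs : ι → AddSubgroup G}

theorem existsUnique_mem_of_mem_of_ne_zero (hp : p.Prime) (hHexp : ∀ h ∈ H, p • h = 0)
    (hHsinj : Function.Injective Hs) (hHscard : ∀ j, Nat.card (Hs j) = p)
    (hHsall : ∀ K : AddSubgroup G, K ≤ H → Nat.card K = p → ∃ j, K = Hs j)
    {x : G} (hxH : x ∈ H) (hx0 : x ≠ 0) : ∃! j, x ∈ Hs j := by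
  have : Fact p.Prime := ⟨hp⟩
  obtain ⟨j, hj⟩ := hHsall _ (AddSubgroup.zmultiples_le_of_mem hxH)
    (by rw [Nat.card_zmultiples, addOrderOf_eq_prime (hHexp x hxH) hx0])
  refine ⟨j, (hj ▸ AddSubgroup.mem_zmultiples x : x ∈ Hs j), fun k hk => hHsinj ?_⟩
  rw [← hj, AddSubgroup.zmultiples_eq_of_mem_of_natCard_eq_prime hp (hHscard k) hk hx0]

theorem card_filter_mem_eq [Fintype ι] (hp : p.Prime) (hHexp : ∀ h ∈ H, p • h = 0)
    (hHsle : ∀ j, Hs j ≤ H) (hHsinj : Function.Injective Hs)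
    (hHscard : ∀ j, Nat.card (Hs j) = p)
    (hHsall : ∀ K : AddSubgroup G, K ≤ H → Nat.card K = p → ∃ j, K = Hs j) (x : G) :
    #{j | x ∈ Hs j} = if x = 0 then Fintype.card ι else if x ∈ H then 1 else 0 := by
  split_ifs with hx0 hxH
  · simp [hx0]
  · obtain ⟨j, hj, huniq⟩ :=
      existsUnique_mem_of_mem_of_ne_zero hp hHexp hHsinj hHscard hHsall hxH hx0
    exact card_eq_one.mpr ⟨j, ext fun k => by simpa using ⟨huniq k, fun h => h ▸ hj⟩⟩
  · exact Finset.card_eq_zero.mpr (Finset.filter_eq_empty_iff.mpr fun j _ hj => hxH (hHsle j hj))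

end Lines

theorem e_gamma_is_combination_of_lifts_general
    (p : ℕ) (hp : p.Prime)
    (D : Type) [AddCommGroup D] [Fintype D]
    (γ : D)
    (H : AddSubgroup D)
    (hHcard : Nat.card H = p ^ 2) (hHexp : ∀ h ∈ H, p • h = 0)
    (Hs : Fin (p + 1) → AddSubgroup D)
    (hHsle : ∀ j, Hs j ≤ H) (hHsinj : Function.Injective Hs)
    (hHscard : ∀ j, Nat.card (Hs j) = p)
    (hHsall : ∀ K : AddSubgroup D, K ≤ H → Nat.card K = p → ∃ j, K = Hs j) :
    ∀ β : D, (if β = γ then (1 : ℂ) else 0)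
      = (1 / (p : ℂ)) *
        ((∑ j ∈ Finset.univ.erase (0 : Fin (p + 1)),
            (if β - γ ∈ Hs j then (1 : ℂ) else 0))
         - ∑ μ : D, (if μ ∈ Hs (1 : Fin (p + 1)) ∧ μ ≠ 0 ∧ β - γ - μ ∈ Hs (0 : Fin (p + 1))
             then (1 : ℂ) else 0)) := by
  intro β
  have : NeZero p := ⟨hp.ne_zero⟩
  have h10 : Hs 1 ≠ Hs 0 := hHsinj.ne one_ne_zero
  have hsup : Hs 1 ⊔ Hs 0 = H := AddSubgroup.sup_eq_of_natCard_eq_prime_sq hp (hHscard 1)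
    (hHscard 0) h10 (hHsle 1) (hHsle 0) hHcard
  have hlines : (#{j | β - γ ∈ Hs j} : ℂ)
      = if β = γ then (p : ℂ) + 1 else if β - γ ∈ H then 1 else 0 := by
    rw [card_filter_mem_eq hp hHexp hHsle hHsinj hHscard hHsall, sub_eq_zero]
    split_ifs <;> simp
  have hplane := congrArg (Nat.cast : ℕ → ℂ) (AddSubgroup.card_filter_mem_ne_zero_sub_mem_add
    (AddSubgroup.disjoint_of_natCard_eq_prime hp (hHscard 1) (hHscard 0) h10) (β - γ))
  rw [hsup] at hplane
  push_cast at hplane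
  rw [Finset.sum_erase_eq_sub (Finset.mem_univ _), Finset.sum_boole, Finset.sum_boole, hlines,
    eq_sub_of_add_eq hplane]
  obtain rfl | hβ := eq_or_ne β γ
  · have hp0 : (p : ℂ) ≠ 0 := Nat.cast_ne_zero.mpr hp.ne_zero
    simp only [sub_self, zero_mem, if_true]
    field_simp
    ring
  · simp only [hβ, if_false]
    ring

/-- let `D` be a discriminant form of even signature and level a power
of a prime `p`, and let `γ` be a (nonzero) isotropic element such that `γ^⊥` contains
an isotropic subgroup `H ≅ (ℤ/pℤ)²`.  Then, with `H₀, H₁, …, H_p` the `p+1` order-`p`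
subgroups of `H`, `e^γ` is the following linear combination of isotropic lifts:
`e^γ = (1/p)(Σ_{j=1}^p ↑_{H_j}^D(e^{γ+H_j}) - ↑_{H_0}^D(Σ_{μ∈H_1∖{0}} e^{γ+μ+H_0}))`,
an identity of functions on `D` (here `↑_{H_j}^D(e^{γ+H_j})` is the characteristic
function of the coset `γ + H_j`). -/
theorem e_gamma_is_combination_of_lifts
    (p : ℕ) (hp : p.Prime)
    (D : Type) [AddCommGroup D] [Fintype D] (q : D → ℚ) (hD : IsDiscForm D q)
    (l : ℕ) (hlev : ∀ γ : D, ∃ k : ℤ, (p : ℚ) ^ l * q γ = (k : ℚ))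
    (σ : ℂ)
    (hMilgram : ∑ γ : D, e (q γ) = (Real.sqrt (Fintype.card D) : ℂ) * σ)
    (hEvenSig : σ ^ 4 = 1)
    (γ : D) (hγiso : ∃ k : ℤ, q γ = (k : ℚ)) (hγne : γ ≠ 0)
    (H : AddSubgroup D)
    (hHiso : ∀ h ∈ H, ∃ k : ℤ, q h = (k : ℚ))
    (hHperp : ∀ h ∈ H, ∃ k : ℤ, q (γ + h) - q γ - q h = (k : ℚ))
    (hHcard : Nat.card H = p ^ 2) (hHexp : ∀ h ∈ H, p • h = 0)
    (Hs : Fin (p + 1) → AddSubgroup D)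
    (hHsle : ∀ j, Hs j ≤ H) (hHsinj : Function.Injective Hs)
    (hHscard : ∀ j, Nat.card (Hs j) = p)
    (hHsall : ∀ K : AddSubgroup D, K ≤ H → Nat.card K = p → ∃ j, K = Hs j) :
    ∀ β : D, (if β = γ then (1 : ℂ) else 0)
      = (1 / (p : ℂ)) *
        ((∑ j ∈ Finset.univ.erase (0 : Fin (p + 1)),
            (if β - γ ∈ Hs j then (1 : ℂ) else 0))
         - ∑ μ : D, (if μ ∈ Hs (1 : Fin (p + 1)) ∧ μ ≠ 0 ∧ β - γ - μ ∈ Hs (0 : Fin (p + 1))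
             then (1 : ℂ) else 0)) :=
  e_gamma_is_combination_of_lifts_general p hp D γ H hHcard hHexp Hs hHsle hHsinj hHscard hHsall
end

section
/- Let D be a discriminant form of level 2^l (a finite abelian 2-group with nondegenerate quadratic form q: D → Q/Z) which contains no non-trivial isotropic elements, i.e. q(γ) = 0 mod 1 implies γ = 0. Then |D| ≤ 32 and the exponent of D divides 4. -/
open scoped Classical

/-! ### Auxiliary lemmas about integrality of rationals -/

private def isZ (x : ℚ) : Prop := ∃ k : ℤ, x = (k : ℚ)

private lemma isZ_int (k : ℤ) : isZ (k : ℚ) := ⟨k, rfl⟩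

private lemma isZ_zero : isZ (0 : ℚ) := ⟨0, by norm_num⟩

private lemma isZ.add {x y : ℚ} (hx : isZ x) (hy : isZ y) : isZ (x + y) := by
  obtain ⟨a, ha⟩ := hx; obtain ⟨b, hb⟩ := hy
  exact ⟨a + b, by push_cast; linarith⟩

private lemma isZ.neg {x : ℚ} (hx : isZ x) : isZ (-x) := by
  obtain ⟨a, ha⟩ := hx; exact ⟨-a, by push_cast; linarith⟩

private lemma isZ.sub {x y : ℚ} (hx : isZ x) (hy : isZ y) : isZ (x - y) := by
  have := hx.add hy.neg; simpa [sub_eq_add_neg] using this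

private lemma isZ.mul {x y : ℚ} (hx : isZ x) (hy : isZ y) : isZ (x * y) := by
  obtain ⟨a, ha⟩ := hx; obtain ⟨b, hb⟩ := hy
  exact ⟨a * b, by push_cast; rw [ha, hb]⟩

private lemma isZ_congr {x y : ℚ} (h : x = y) : isZ x ↔ isZ y := by rw [h]

private lemma not_isZ_half : ¬ isZ ((1 : ℚ) / 2) := by
  rintro ⟨k, hk⟩
  have h2 : (1 : ℚ) = 2 * (k : ℚ) := by linarith [hk]
  have : (1 : ℤ) = 2 * k := by exact_mod_cast h2
  omega

/-- If `2x ∈ ℤ` but `x ∉ ℤ` then `x - 1/2 ∈ ℤ`. -/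
private lemma isZ_sub_half {x : ℚ} (h2 : isZ (2 * x)) (h : ¬ isZ x) : isZ (x - 1 / 2) := by
  obtain ⟨k, hk⟩ := h2
  rcases Int.even_or_odd k with ⟨m, hm⟩ | ⟨m, hm⟩
  · exact absurd ⟨m, by subst hm; push_cast at hk ⊢; linarith⟩ h
  · exact ⟨m, by subst hm; push_cast at hk ⊢; linarith⟩

/-! ### The bilinear form and its basic properties -/

private def B {D : Type} [AddCommGroup D] (q : D → ℚ) (β γ : D) : ℚ :=
  q (β + γ) - q β - q γ

section Main

variable {D : Type} [AddCommGroup D] [Fintype D] {q : D → ℚ} (hD : IsDiscForm D q)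

private lemma hq0 (hD : IsDiscForm D q) : isZ (q 0) := by
  obtain ⟨k, hk⟩ := hD.quad 0 0
  exact ⟨k, by simpa using hk⟩

private lemma hsq (hD : IsDiscForm D q) (n : ℤ) (γ : D) :
    isZ (q (n • γ) - (n : ℚ) ^ 2 * q γ) := hD.quad n γ

private lemma hb_add (hD : IsDiscForm D q) (α β γ : D) :
    isZ (B q (α + β) γ - B q α γ - B q β γ) := by
  obtain ⟨k, hk⟩ := hD.bilin α β γ
  exact ⟨k, by simp only [B]; linarith⟩

private lemma hb_zero (hD : IsDiscForm D q) (γ : D) : isZ (B q 0 γ) := by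
  have h0 := hq0 hD
  obtain ⟨k, hk⟩ := h0
  exact ⟨-k, by simp only [B, zero_add]; push_cast; linarith⟩

private lemma hb_symm (q : D → ℚ) (β γ : D) : B q β γ = B q γ β := by
  simp only [B, add_comm]; ring

private lemma hb_nsmul (hD : IsDiscForm D q) (n : ℕ) (β γ : D) :
    isZ (B q (n • β) γ - (n : ℚ) * B q β γ) := by
  induction n with
  | zero => simpa using hb_zero hD γ
  | succ n ih =>
      have h1 := hb_add hD (n • β) β γ
      have h2 := ih.add h1
      have heq : B q (n • β) γ - (n : ℚ) * B q β γ +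
          (B q (n • β + β) γ - B q (n • β) γ - B q β γ)
          = B q ((n + 1) • β) γ - ((n : ℚ) + 1) * B q β γ := by
        rw [succ_nsmul]; ring
      rw [heq] at h2
      exact (isZ_congr (by push_cast; ring)).mpr h2

private lemma hb_self (hD : IsDiscForm D q) (γ : D) : isZ (B q γ γ - 2 * q γ) := by
  have h := hsq hD 2 γ
  rw [two_zsmul] at h
  exact (isZ_congr (by simp only [B]; push_cast; ring)).mpr h

/-- If `2^a • γ = 0` then `2^(a+1) q(γ) ∈ ℤ`. -/
private lemma key1 (hD : IsDiscForm D q) {γ : D} {a : ℕ} (h : (2 ^ a : ℕ) • γ = 0) :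
    isZ ((2 : ℚ) ^ (a + 1) * q γ) := by
  have h1 := hb_nsmul hD (2 ^ a) γ γ
  rw [h] at h1
  have h2 := hb_zero hD γ
  -- isZ (2^a * B q γ γ)
  have h3 : isZ ((2 : ℚ) ^ a * B q γ γ) := by
    have := h2.sub h1
    exact (isZ_congr (by push_cast; ring)).mpr this
  have h4 : isZ ((2 : ℚ) ^ a * (B q γ γ - 2 * q γ)) :=
    ((isZ_int (2 ^ a)).mul (hb_self hD γ)).imp (fun k hk => by push_cast at hk ⊢; linarith)
  have := h3.sub h4
  exact (isZ_congr (by ring)).mpr this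

/-- Every element is killed by `2^l`. -/
private lemma exp2l (hD : IsDiscForm D q)
    (l : ℕ) (hlev : ∀ γ : D, ∃ k : ℤ, (2 : ℚ) ^ l * q γ = (k : ℚ)) (γ : D) :
    (2 ^ l : ℕ) • γ = 0 := by
  apply hD.nondeg
  intro β
  have h1 := hb_nsmul hD (2 ^ l) γ β
  have h2 : isZ ((2 : ℚ) ^ l * B q γ β) := by
    have ha : isZ ((2 : ℚ) ^ l * q (γ + β)) := hlev (γ + β)
    have hb : isZ ((2 : ℚ) ^ l * q γ) := hlev γ
    have hc : isZ ((2 : ℚ) ^ l * q β) := hlev β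
    have := (ha.sub hb).sub hc
    exact (isZ_congr (by simp only [B]; push_cast; ring)).mpr this
  have h3 := h1.add h2
  have h4 : isZ (B q ((2 ^ l : ℕ) • γ) β) := by
    have : (2 : ℚ) ^ l = ((2 ^ l : ℕ) : ℚ) := by push_cast; ring
    exact (isZ_congr (by rw [this]; ring)).mpr h3
  obtain ⟨k, hk⟩ := h4
  exact ⟨k, by simpa [B] using hk⟩

/-- Step-down: `2^(a+3) • γ = 0` implies `2^(a+2) • γ = 0`. -/
private lemma stepdown (hD : IsDiscForm D q)
    (hiso : ∀ γ : D, (∃ k : ℤ, q γ = (k : ℚ)) → γ = 0)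
    {γ : D} {a : ℕ} (h : (2 ^ (a + 3) : ℕ) • γ = 0) : (2 ^ (a + 2) : ℕ) • γ = 0 := by
  have h1 : isZ ((2 : ℚ) ^ (a + 4) * q γ) := key1 hD h
  have h2 := hsq hD (2 ^ (a + 2)) γ
  -- q(2^(a+2) • γ) ≡ 2^(2a+4) q γ = 2^a * (2^(a+4) q γ)
  have h3 : isZ ((2 : ℚ) ^ a * ((2 : ℚ) ^ (a + 4) * q γ)) :=
    ((isZ_int (2 ^ a)).mul h1).imp (fun k hk => by push_cast at hk ⊢; linarith)
  have h4 := h2.add h3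
  have h5 : isZ (q ((2 ^ (a + 2) : ℤ) • γ)) := by
    refine (isZ_congr ?_).mpr h4
    push_cast
    ring
  apply hiso
  obtain ⟨k, hk⟩ := h5
  refine ⟨k, ?_⟩
  rw [← hk]
  congr 1
  rw [show ((2 ^ (a + 2) : ℤ)) = ((2 ^ (a + 2) : ℕ) : ℤ) by push_cast; ring, natCast_zsmul]

private lemma four_helper (hD : IsDiscForm D q)
    (hiso : ∀ γ : D, (∃ k : ℤ, q γ = (k : ℚ)) → γ = 0)
    (a : ℕ) : ∀ γ : D, (2 ^ (a + 2) : ℕ) • γ = 0 → (4 : ℕ) • γ = 0 := by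
  induction a with
  | zero => intro γ h; simpa using h
  | succ a ih =>
      intro γ h
      exact ih γ (stepdown hD hiso (by simpa [show a + 1 + 2 = a + 3 by ring] using h))

private lemma four (hD : IsDiscForm D q)
    (l : ℕ) (hlev : ∀ γ : D, ∃ k : ℤ, (2 : ℚ) ^ l * q γ = (k : ℚ))
    (hiso : ∀ γ : D, (∃ k : ℤ, q γ = (k : ℚ)) → γ = 0) (γ : D) :
    (4 : ℕ) • γ = 0 := by
  apply four_helper hD hiso l γ
  have h := exp2l hD l hlev γ
  have : (2 ^ (l + 2) : ℕ) • γ = (2 ^ 2 : ℕ) • ((2 ^ l : ℕ) • γ) := by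
    rw [← mul_smul, ← pow_add, add_comm]
  rw [this, h, smul_zero]

private lemma eight (hD : IsDiscForm D q)
    (l : ℕ) (hlev : ∀ γ : D, ∃ k : ℤ, (2 : ℚ) ^ l * q γ = (k : ℚ))
    (hiso : ∀ γ : D, (∃ k : ℤ, q γ = (k : ℚ)) → γ = 0) (γ : D) :
    isZ (8 * q γ) := by
  have h4 : (2 ^ 2 : ℕ) • γ = 0 := by
    simpa using four hD l hlev hiso γ
  have := key1 hD h4
  exact (isZ_congr (by norm_num)).mpr this

/-- If `2 • u = 0` then `2 * B q u v ∈ ℤ`. -/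
private lemma twoB (hD : IsDiscForm D q) {u : D} (v : D) (hu : (2 : ℕ) • u = 0) :
    isZ (2 * B q u v) := by
  have h1 := hb_nsmul hD 2 u v
  rw [hu] at h1
  have h2 := hb_zero hD v
  have := h2.sub h1
  exact (isZ_congr (by push_cast; ring)).mpr this

/-- A nonzero 2-torsion element with `2 q γ ∈ ℤ` has `q γ ≡ 1/2`. -/
private lemma qhalf (hiso : ∀ γ : D, (∃ k : ℤ, q γ = (k : ℚ)) → γ = 0)
    {γ : D} (hne : γ ≠ 0) (h2 : isZ (2 * q γ)) : isZ (q γ - 1 / 2) :=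
  isZ_sub_half h2 (fun h => hne (hiso γ h))

/-- For 2-torsion `u v` with `u, v, u+v` nonzero and `2qu, 2qv ∈ ℤ`:
`B q u v ≡ 1/2` mod 1. -/
private lemma bhalf (hD : IsDiscForm D q)
    (hiso : ∀ γ : D, (∃ k : ℤ, q γ = (k : ℚ)) → γ = 0)
    {u v : D} (hu : (2 : ℕ) • u = 0) (hv : (2 : ℕ) • v = 0)
    (hu0 : u ≠ 0) (hv0 : v ≠ 0) (huv0 : u + v ≠ 0)
    (hqu : isZ (2 * q u)) (hqv : isZ (2 * q v)) :
    isZ (B q u v + 1 / 2) := by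
  have h2uv : isZ (2 * q (u + v)) := by
    have hB := twoB hD v hu
    have h1 : isZ (2 * q u) := hqu
    have h2 : isZ (2 * q v) := hqv
    have := (hB.add h1).add h2
    exact (isZ_congr (by simp only [B]; ring)).mpr this
  have huvh := qhalf hiso huv0 h2uv
  have huh := qhalf hiso hu0 hqu
  have hvh := qhalf hiso hv0 hqv
  have := (huvh.sub huh).sub hvh
  exact (isZ_congr (by simp only [B]; ring)).mpr this

end Main

/-- a discriminant form of level `2^l` (a finite abelian 2-group with
nondegenerate quadratic form `q : D → ℚ/ℤ`) containing no non-trivial isotropic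
elements has order at most 32 and exponent dividing 4. -/
theorem anisotropic_two_adic_small
    (D : Type) [AddCommGroup D] [Fintype D] (q : D → ℚ) (hD : IsDiscForm D q)
    (l : ℕ) (hlev : ∀ γ : D, ∃ k : ℤ, (2 : ℚ) ^ l * q γ = (k : ℚ))
    (hiso : ∀ γ : D, (∃ k : ℤ, q γ = (k : ℚ)) → γ = 0) :
    Fintype.card D ≤ 32 ∧ ∀ γ : D, (4 : ℕ) • γ = 0 := by
  have h4 : ∀ γ : D, (4 : ℕ) • γ = 0 := four hD l hlev hiso
  refine ⟨?_, h4⟩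
  -- two-torsion negation is identity
  have hneg : ∀ γ : D, (2 : ℕ) • γ = 0 → -γ = γ := by
    intro γ h
    rw [two_nsmul] at h
    exact (neg_eq_of_add_eq_zero_left h)
  -- the finsets
  set SK : Finset D := Finset.univ.filter (fun γ => (2 : ℕ) • γ = 0 ∧ isZ (2 * q γ)) with hSK
  set S2 : Finset D := Finset.univ.filter (fun γ => (2 : ℕ) • γ = 0) with hS2
  have memSK : ∀ γ : D, γ ∈ SK ↔ ((2 : ℕ) • γ = 0 ∧ isZ (2 * q γ)) := by
    intro γ; simp [hSK]
  have memS2 : ∀ γ : D, γ ∈ S2 ↔ (2 : ℕ) • γ = 0 := by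
    intro γ; simp [hS2]
  -- Step 1: |SK| ≤ 4
  have hSK4 : SK.card ≤ 4 := by
    by_contra hc
    push_neg at hc
    have h5 : 5 ≤ SK.card := hc
    have h0SK : (0 : D) ∈ SK := (memSK 0).mpr ⟨smul_zero _, by
      obtain ⟨k, hk⟩ := hq0 hD; exact ⟨2 * k, by push_cast; rw [hk]⟩⟩
    -- pick x ≠ 0
    obtain ⟨x, hxSK, hx0⟩ : ∃ x ∈ SK, x ∉ ({0} : Finset D) := by
      by_contra hsub
      push_neg at hsub
      have : SK ⊆ {0} := fun a ha => hsub a ha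
      have := Finset.card_le_card this
      simp at this; omega
    obtain ⟨y, hySK, hy⟩ : ∃ y ∈ SK, y ∉ ({0, x} : Finset D) := by
      by_contra hsub
      push_neg at hsub
      have : SK ⊆ {0, x} := fun a ha => hsub a ha
      have := Finset.card_le_card this
      have h2 : ({0, x} : Finset D).card ≤ 2 := Finset.card_insert_le _ _ |>.trans (by simp)
      omega
    obtain ⟨z, hzSK, hz⟩ : ∃ z ∈ SK, z ∉ ({0, x, y, x + y} : Finset D) := by
      by_contra hsub
      push_neg at hsub
      have : SK ⊆ {0, x, y, x + y} := fun a ha => hsub a ha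
      have := Finset.card_le_card this
      have h2 : ({0, x, y, x + y} : Finset D).card ≤ 4 := by
        apply (Finset.card_insert_le _ _).trans
        have h3 : ({x, y, x + y} : Finset D).card ≤ 3 := by
          apply (Finset.card_insert_le _ _).trans
          have h4 : ({y, x + y} : Finset D).card ≤ 2 := by
            apply (Finset.card_insert_le _ _).trans
            simp
          omega
        omega
      omega
    simp only [Finset.mem_singleton] at hx0
    simp only [Finset.mem_insert, Finset.mem_singleton, not_or] at hy hz
    obtain ⟨hy0, hyx⟩ := hy
    obtain ⟨hz0, hzx, hzy, hzxy⟩ := hz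
    obtain ⟨hx2, hxq⟩ := (memSK x).mp hxSK
    obtain ⟨hy2, hyq⟩ := (memSK y).mp hySK
    obtain ⟨hz2, hzq⟩ := (memSK z).mp hzSK
    -- nonvanishing of sums
    have hyx0 : y + x ≠ 0 := fun h => hyx (by
      rw [← hneg x hx2]; exact (neg_eq_of_add_eq_zero_left h).symm)
    have hzx0 : z + x ≠ 0 := fun h => hzx (by
      rw [← hneg x hx2]; exact (neg_eq_of_add_eq_zero_left h).symm)
    have hyz0 : y + z ≠ 0 := fun h => hzy (by
      rw [← hneg y hy2]; exact (neg_eq_of_add_eq_zero_right h).symm)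
    have hyz2 : (2 : ℕ) • (y + z) = 0 := by rw [smul_add, hy2, hz2, add_zero]
    have hyzx0 : (y + z) + x ≠ 0 := fun h => hzxy (by
      have hx' : y + z = x := by
        rw [← hneg x hx2]; exact (neg_eq_of_add_eq_zero_left h).symm
      have hz' : z = x - y := by rw [← hx']; abel
      rw [hz', sub_eq_add_neg, hneg y hy2])
    -- the three half-values
    have hByx := bhalf hD hiso hy2 hx2 hy0 hx0 hyx0 hyq hxq
    have hBzx := bhalf hD hiso hz2 hx2 hz0 hx0 hzx0 hzq hxq
    have hqyz : isZ (2 * q (y + z)) := by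
      have hB := twoB hD z hy2
      have := (hB.add hyq).add hzq
      exact (isZ_congr (by simp only [B]; ring)).mpr this
    have hByzx := bhalf hD hiso hyz2 hx2 hyz0 hx0 hyzx0 hqyz hxq
    -- additivity
    have hAdd := hb_add hD y z x
    -- B(y+z,x) ≡ B(y,x) + B(z,x); each ≡ 1/2, so B(y+z,x) ≡ 0, but also ≡ 1/2.
    have hfinal : isZ ((1 : ℚ) / 2) := by
      have h1 := (hByzx.sub hAdd).sub hByx
      have h2 := (h1.sub hBzx).neg
      exact (isZ_congr (by ring)).mpr h2
    exact not_isZ_half hfinal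
  -- Step 2: |S2| ≤ 2 * |SK|
  have hS2card : S2.card ≤ 2 * SK.card := by
    rcases (S2 \ SK).eq_empty_or_nonempty with hemp | ⟨β₀, hβ₀⟩
    · have : S2 ⊆ SK := by
        intro a ha
        by_contra h
        exact (Finset.notMem_empty a) (hemp ▸ Finset.mem_sdiff.mpr ⟨ha, h⟩)
      have := Finset.card_le_card this
      omega
    · have hβmem := Finset.mem_sdiff.mp hβ₀
      have hβ2 : (2 : ℕ) • β₀ = 0 := (memS2 β₀).mp hβmem.1
      have hβnq : ¬ isZ (2 * q β₀) := fun h => hβmem.2 ((memSK β₀).mpr ⟨hβ2, h⟩)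
      -- half-integrality of 2qβ₀
      have h4β : isZ (4 * q β₀) := by
        have : (2 ^ 1 : ℕ) • β₀ = 0 := by simpa using hβ2
        have := key1 hD this
        exact (isZ_congr (by norm_num)).mpr this
      have hβhalf : isZ (2 * q β₀ - 1 / 2) :=
        isZ_sub_half ((isZ_congr (by ring)).mpr h4β) hβnq
      -- injection γ ↦ γ + β₀ from S2 \ SK into SK
      have hcard : (S2 \ SK).card ≤ SK.card := by
        apply Finset.card_le_card_of_injOn (fun γ => γ + β₀)
        · intro γ hγ
          have hγmem := Finset.mem_sdiff.mp hγ
          have hγ2 : (2 : ℕ) • γ = 0 := (memS2 γ).mp hγmem.1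
          have hγnq : ¬ isZ (2 * q γ) := fun h => hγmem.2 ((memSK γ).mpr ⟨hγ2, h⟩)
          have h4γ : isZ (4 * q γ) := by
            have : (2 ^ 1 : ℕ) • γ = 0 := by simpa using hγ2
            have := key1 hD this
            exact (isZ_congr (by norm_num)).mpr this
          have hγhalf : isZ (2 * q γ - 1 / 2) :=
            isZ_sub_half ((isZ_congr (by ring)).mpr h4γ) hγnq
          apply (memSK _).mpr
          constructor
          · rw [smul_add, hγ2, hβ2, add_zero]
          · have hB := twoB hD β₀ hγ2
            have h1 : isZ (1 : ℚ) := ⟨1, by norm_num⟩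
            have := ((hB.add hγhalf).add hβhalf).add h1
            exact (isZ_congr (by simp only [B]; ring)).mpr this
        · intro a _ b _ h
          exact add_right_cancel h
      have := Finset.card_le_card_sdiff_add_card (s := S2) (t := SK)
      omega
  -- Step 3: doubling map, fibers and image
  have himage : ∀ γ : D, ((2 : ℕ) • γ) ∈ SK := by
    intro γ
    apply (memSK _).mpr
    constructor
    · rw [← mul_smul]; exact h4 γ
    · have hq2 := hsq hD 2 γ
      have h8 := eight hD l hlev hiso γ
      have h2q2 : isZ (2 * (q ((2:ℤ) • γ) - (2:ℚ)^2 * q γ)) :=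
        ((isZ_int 2).mul hq2).imp (fun k hk => by push_cast at hk ⊢; linarith)
      have := h2q2.add h8
      have heq : (2:ℤ) • γ = (2:ℕ) • γ := by
        rw [show ((2:ℤ)) = ((2:ℕ):ℤ) by norm_num, natCast_zsmul]
      refine (isZ_congr ?_).mpr this
      rw [heq]; ring
  have hmain : (Finset.univ : Finset D).card ≤ S2.card * SK.card := by
    refine Finset.card_le_mul_card_image_of_maps_to
      (f := fun γ : D => (2 : ℕ) • γ) (s := Finset.univ) (t := SK)
      (fun a _ => himage a) S2.card ?_
    intro b hb
    -- fiber over b: pick a base point γ₀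
    rcases (Finset.univ.filter (fun x : D => (2:ℕ) • x = b)).eq_empty_or_nonempty with
      hemp | ⟨γ₀, hγ₀⟩
    · rw [hemp]; simp
    · have hγ₀b : (2:ℕ) • γ₀ = b := (Finset.mem_filter.mp hγ₀).2
      apply Finset.card_le_card_of_injOn (fun γ => γ - γ₀)
      · intro a ha
        have hab : (2:ℕ) • a = b := (Finset.mem_filter.mp ha).2
        apply (memS2 _).mpr
        rw [smul_sub, hab, hγ₀b, sub_self]
      · intro a _ c _ h
        exact sub_left_injective h
  have : Fintype.card D ≤ S2.card * SK.card := by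
    rw [← Finset.card_univ]; exact hmain
  calc Fintype.card D ≤ S2.card * SK.card := this
    _ ≤ (2 * SK.card) * SK.card := Nat.mul_le_mul_right _ hS2card
    _ ≤ (2 * 4) * 4 := Nat.mul_le_mul (Nat.mul_le_mul_left _ hSK4) hSK4
    _ = 32 := by norm_num
end
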